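/- arXiv:0804.4790 — 3 statements merged into one kernel-verified Lean document; each statement's English description precedes it below -/
import Mathlib

section
/- Let G be a group in which (a) whenever [a^p, b^q] = 1 for nonzero integers p, q, we have [a, b] = 1, and (b) whenever [a, b] = 1 and b = c a c⁻¹, we have a = b. If G has a presentation ⟨a, b ∣ a^n (a^p b^q)^k = 1⟩ with k, n, q nonzero integers, then G is abelian. -/
/-!
The relator gives `(a^p b^q)^k = a^(-n)`, which commutes with `a^n`; by (a) the element `a^p b^q`
commutes with `a`, hence so do `b^q` and, by (a) once more, `b`. As `a` and `b` generate `G`,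
the group is abelian.
-/

open FreeGroup
open scoped commutatorElement

/-- The single relator `a^n * (a^p * b^q)^k` in the free group on two generators,
where `a = FreeGroup.of true` and `b = FreeGroup.of false`. -/
def relStmt0 (n p q k : ℤ) : Set (FreeGroup Bool) :=
  {FreeGroup.of true ^ n * (FreeGroup.of true ^ p * FreeGroup.of false ^ q) ^ k}

open Subgroup in
theorem commute_of_closure_eq_top {G : Type*} [Group G] {s : Set G} (hs : closure s = ⊤)
    (hcomm : ∀ x ∈ s, ∀ y ∈ s, Commute x y) (x y : G) : Commute x y :=
  Set.centralizer_centralizer_comm_of_comm hcomm x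
    (closure_le_centralizer_centralizer s (hs ▸ mem_top x)) y
    (closure_le_centralizer_centralizer s (hs ▸ mem_top y))

theorem PresentedGroup.closure_range_comp_of_surjective {α G : Type*} [Group G]
    {rels : Set (FreeGroup α)} {f : PresentedGroup rels →* G} (hf : Function.Surjective f) :
    Subgroup.closure (Set.range (f ∘ PresentedGroup.of)) = ⊤ := by
  rw [Set.range_comp, ← MonoidHom.map_closure, PresentedGroup.closure_range_of,
    Subgroup.map_top_of_surjective f hf]

theorem Commute.of_relator_eq_one {G : Type*} [Group G]
    (hroot : ∀ a b : G, ∀ p q : ℤ, p ≠ 0 → q ≠ 0 → ⁅a ^ p, b ^ q⁆ = 1 → ⁅a, b⁆ = 1)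
    {a b : G} {n p q k : ℤ} (hk : k ≠ 0) (hn : n ≠ 0) (hq : q ≠ 0)
    (h : a ^ n * (a ^ p * b ^ q) ^ k = 1) : Commute a b := by
  simp only [commutatorElement_eq_one_iff_commute] at hroot
  have hw : Commute ((a ^ p * b ^ q) ^ k) (a ^ n) := by
    rw [eq_inv_of_mul_eq_one_right h]
    exact (Commute.refl _).inv_left
  have hwa : Commute (a ^ p * b ^ q) a := hroot _ _ k n hk hn hw
  have hba : Commute (b ^ q) a := by
    simpa using ((Commute.refl a).zpow_left p).inv_left.mul_left hwa
  exact (hroot b a q 1 hq one_ne_zero (by simpa using hba)).symm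

theorem stmt0_general (G : Type*) [Group G]
    (ha : ∀ a b : G, ∀ p q : ℤ, p ≠ 0 → q ≠ 0 → ⁅a ^ p, b ^ q⁆ = 1 → ⁅a, b⁆ = 1)
    (n p q k : ℤ) (hk : k ≠ 0) (hn : n ≠ 0) (hq : q ≠ 0)
    (φ : PresentedGroup (relStmt0 n p q k) ≃* G) :
    ∀ x y : G, x * y = y * x := by
  set f : PresentedGroup (relStmt0 n p q k) →* G := φ.toMonoidHom
  have hrel : f (.of true) ^ n * (f (.of true) ^ p * f (.of false) ^ q) ^ k = 1 := by
    simpa [PresentedGroup.of] using congrArg f (PresentedGroup.one_of_mem (Set.mem_singleton _))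
  have hab : Commute (f (.of true)) (f (.of false)) := .of_relator_eq_one ha hk hn hq hrel
  have hcomm : ∀ x ∈ Set.range (f ∘ PresentedGroup.of), ∀ y ∈ Set.range (f ∘ PresentedGroup.of),
      Commute x y := by
    rintro _ ⟨_ | _, rfl⟩ _ ⟨_ | _, rfl⟩
    exacts [.refl _, hab.symm, hab, .refl _]
  exact commute_of_closure_eq_top
    (PresentedGroup.closure_range_comp_of_surjective φ.surjective) hcomm

/-- let `G` be a group in which (a) `⁅a^p, b^q⁆ = 1` for nonzero integers
`p, q` implies `⁅a, b⁆ = 1`, and (b) `⁅a, b⁆ = 1` and `b = c * a * c⁻¹` imply `a = b`.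
If `G` has a presentation `⟨a, b ∣ a^n (a^p b^q)^k = 1⟩` with `k, n, q` nonzero
integers, then `G` is abelian. -/
theorem stmt0 (G : Type*) [Group G]
    (ha : ∀ a b : G, ∀ p q : ℤ, p ≠ 0 → q ≠ 0 → ⁅a ^ p, b ^ q⁆ = 1 → ⁅a, b⁆ = 1)
    (hb : ∀ a b c : G, ⁅a, b⁆ = 1 → b = c * a * c⁻¹ → a = b)
    (n p q k : ℤ) (hk : k ≠ 0) (hn : n ≠ 0) (hq : q ≠ 0)
    (φ : PresentedGroup (relStmt0 n p q k) ≃* G) :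
    ∀ x y : G, x * y = y * x :=
  stmt0_general G ha n p q k hk hn hq φ
end

section
/- Let H be the group ⟨x, y ∣ x^a = y^b⟩ with a, b ≥ 2. Then the center of H is the cyclic subgroup generated by x^a (= y^b), and H modulo its center is isomorphic to the free product Z/a * Z/b. -/
/-- The presentation `⟨x, y ∣ x^a = y^b⟩` (`x = of true`, `y = of false`). -/
def torusRel (a b : ℕ) : Set (FreeGroup Bool) :=
  {FreeGroup.of true ^ a * (FreeGroup.of false ^ b)⁻¹}

/-- The presentation `⟨x, y ∣ x^a, y^b⟩` of the free product `ℤ/a * ℤ/b`. -/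
def freeProdRel (a b : ℕ) : Set (FreeGroup Bool) :=
  {FreeGroup.of true ^ a, FreeGroup.of false ^ b}

/-!
Since `x^a = y^b` commutes with both generators, `N = ⟨x^a⟩` is central, and killing it turns
the relation `x^a = y^b` into `x^a = y^b = 1`, so `H / N ≅ ℤ/a * ℤ/b`. A free product of
nontrivial groups has trivial centre: a nonempty reduced word cannot commute with every
letter. Being a central subgroup with centreless quotient, `N` is then the whole centre of `H`.
-/

open Monoid

namespace Subgroup

variable {G : Type*} [Group G]

theorem normal_of_le_center {N : Subgroup G} (hN : N ≤ center G) : N.Normal :=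
  ⟨fun n hn g => by rwa [mem_center_iff.1 (hN hn) g, mul_inv_cancel_right]⟩

theorem center_eq_bot_of_mulEquiv {H : Type*} [Group H] (e : G ≃* H) (h : center H = ⊥) :
    center G = ⊥ :=
  (eq_bot_iff_forall _).2 fun g hg => e.injective <| by
    rw [map_one, ← mem_bot, ← h]
    exact MulEquivClass.apply_mem_center e hg

theorem center_eq_of_center_quotient_eq_bot {N : Subgroup G} [N.Normal] (hN : N ≤ center G)
    (hQ : center (G ⧸ N) = ⊥) : center G = N := by
  refine le_antisymm (fun g hg => ?_) hN
  have hmk : (g : G ⧸ N) ∈ center (G ⧸ N) := by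
    rw [mem_center_iff]
    intro q
    induction q using QuotientGroup.induction_on with
    | H x => rw [← QuotientGroup.mk_mul, mem_center_iff.1 hg x, QuotientGroup.mk_mul]
  rwa [hQ, mem_bot, QuotientGroup.eq_one_iff] at hmk

end Subgroup

def multiplicativeZModLift {G : Type*} [Group G] (n : ℕ) (x : G) (hx : x ^ n = 1) :
    Multiplicative (ZMod n) →* G :=
  AddMonoidHom.toMultiplicativeLeft <| ZMod.lift n
    ⟨zmultiplesHom (Additive G) (Additive.ofMul x), by
      rw [zmultiplesHom_apply, natCast_zsmul, ← ofMul_pow, hx, ofMul_one]⟩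

@[simp]
theorem multiplicativeZModLift_ofAdd_one {G : Type*} [Group G] (n : ℕ) (x : G)
    (hx : x ^ n = 1) : multiplicativeZModLift n x hx (Multiplicative.ofAdd 1) = x := by
  simp only [multiplicativeZModLift, AddMonoidHom.coe_toMultiplicativeLeft, Function.comp_apply,
    toAdd_ofAdd]
  rw [← Int.cast_one (R := ZMod n), ZMod.lift_coe]
  simp

theorem MonoidHom.ext_multiplicative_zmod {G : Type*} [Group G] {n : ℕ}
    {f g : Multiplicative (ZMod n) →* G}
    (h : f (Multiplicative.ofAdd 1) = g (Multiplicative.ofAdd 1)) : f = g := by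
  refine MonoidHom.ext fun c => ?_
  obtain ⟨k, hk⟩ := ZMod.intCast_surjective (Multiplicative.toAdd c)
  have hc : c = Multiplicative.ofAdd 1 ^ k := by
    rw [← ofAdd_zsmul, Int.smul_one_eq_cast, hk, ofAdd_toAdd]
  rw [hc, map_zpow, map_zpow, h]

namespace Monoid.CoprodI

variable {ι : Type*} {M : ι → Type*} [∀ i, Group (M i)]

theorem Word.length_rcons_le [∀ i, DecidableEq (M i)] {i : ι} (p : Word.Pair M i) :
    (Word.rcons p).toList.length ≤ p.tail.toList.length + 1 := by
  unfold Word.rcons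
  split_ifs <;> simp

theorem Word.length_rcons_of_head_ne_one [∀ i, DecidableEq (M i)] {i : ι} (p : Word.Pair M i)
    (h : p.head ≠ 1) : (Word.rcons p).toList.length = p.tail.toList.length + 1 := by
  simp [Word.rcons, h]

variable [DecidableEq ι] [∀ i, DecidableEq (M i)]

theorem Word.equivPair_head_ne_one_of_fstIdx_eq {i : ι} {w : Word M} (h : w.fstIdx = some i) :
    (Word.equivPair i w).head ≠ 1 := by
  intro h1
  have hw : Word.rcons (Word.equivPair i w) = w := (Word.equivPair i).symm_apply_apply w
  rw [Word.rcons, dif_pos h1] at hw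
  have htail := (Word.equivPair i w).fstIdx_ne
  rw [hw] at htail
  exact htail h

theorem Word.length_of_smul_le_of_fstIdx_eq {i : ι} {w : Word M} (h : w.fstIdx = some i)
    (m : M i) : (of m • w).toList.length ≤ w.toList.length :=
  calc (of m • w).toList.length ≤ (Word.equivPair i w).tail.toList.length + 1 := by
        rw [Word.of_smul_def]
        exact Word.length_rcons_le _
    _ = (Word.rcons (Word.equivPair i w)).toList.length :=
        (Word.length_rcons_of_head_ne_one _ (Word.equivPair_head_ne_one_of_fstIdx_eq h)).symm
    _ = w.toList.length := by rw [← Word.equivPair_symm, Equiv.symm_apply_apply]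

omit [DecidableEq ι] [∀ i, DecidableEq (M i)] in
theorem NeWord.fstIdx_toWord {i j : ι} (w : NeWord M i j) : w.toWord.fstIdx = some i := by
  simp [Word.fstIdx, NeWord.toWord, w.toList_head?]

theorem NeWord.equiv_prod {i j : ι} (w : NeWord M i j) : Word.equiv w.prod = w.toWord :=
  Word.equiv.apply_symm_apply w.toWord

theorem NeWord.toWord_eq_of_prod_eq {i j k l : ι} {v : NeWord M i j} {w : NeWord M k l}
    (h : v.prod = w.prod) : v.toWord = w.toWord :=
  Word.equiv.symm.injective h

theorem NeWord.exists_prod_eq_of_ne_one {g : CoprodI M} (hg : g ≠ 1) :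
    ∃ (i j : ι) (w : NeWord M i j), w.prod = g := by
  have hne : Word.equiv g ≠ Word.empty := fun h => by
    have hprod := Word.equiv.symm_apply_apply g
    rw [h] at hprod
    exact hg (hprod.symm.trans Word.prod_empty)
  obtain ⟨i, j, w, hw⟩ := NeWord.of_word _ hne
  exact ⟨i, j, w, by rw [NeWord.prod, hw]; exact Word.equiv.symm_apply_apply g⟩

omit [DecidableEq ι] [∀ i, DecidableEq (M i)] in
theorem center_eq_bot [Nontrivial ι] [∀ i, Nontrivial (M i)] :
    Subgroup.center (CoprodI M) = ⊥ := by
  classical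
  refine (Subgroup.eq_bot_iff_forall _).2 fun g hg => ?_
  by_contra hg1
  obtain ⟨i, j, w, rfl⟩ := NeWord.exists_prod_eq_of_ne_one hg1
  have hcomm : ∀ x, x * w.prod = w.prod * x := Subgroup.mem_center_iff.1 hg
  rcases eq_or_ne i j with rfl | hij
  · -- `m w` and `w m` are reduced words beginning in different factors.
    obtain ⟨k, hk⟩ := exists_ne i
    obtain ⟨m, hm⟩ := exists_ne (1 : M k)
    have h : ((NeWord.singleton m hm).append hk w).prod =
        (w.append hk.symm (NeWord.singleton m hm)).prod := by
      simp [NeWord.append_prod, hcomm]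
    have hfst := congrArg Word.fstIdx (NeWord.toWord_eq_of_prod_eq h)
    simp only [NeWord.fstIdx_toWord, Option.some.injEq] at hfst
    exact hk hfst
  · -- `w m` is reduced of length `|w| + 1`, while `m w` has length at most `|w|`.
    obtain ⟨m, hm⟩ := exists_ne (1 : M i)
    have h : Word.equiv (w.append hij.symm (NeWord.singleton m hm)).prod = of m • w.toWord := by
      rw [NeWord.append_prod, NeWord.prod_singleton, ← hcomm, ← w.equiv_prod]
      exact mul_smul (of m) w.prod (Word.empty : Word M)
    have hlen := Word.length_of_smul_le_of_fstIdx_eq (NeWord.fstIdx_toWord w) m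
    rw [← h, NeWord.equiv_prod] at hlen
    simp [NeWord.toWord, NeWord.toList] at hlen

end Monoid.CoprodI

def cyclicRels {ι : Type*} (n : ι → ℕ) : Set (FreeGroup ι) :=
  Set.range fun i => FreeGroup.of i ^ n i

namespace cyclicRels

variable {ι : Type*} (n : ι → ℕ)

theorem of_pow_eq_one (i : ι) :
    (PresentedGroup.of i : PresentedGroup (cyclicRels n)) ^ n i = 1 :=
  PresentedGroup.one_of_mem ⟨i, rfl⟩

def toCoprodI : PresentedGroup (cyclicRels n) →* CoprodI fun i => Multiplicative (ZMod (n i)) :=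
  PresentedGroup.toGroup
      (f := fun i => CoprodI.of (M := fun i => Multiplicative (ZMod (n i))) (.ofAdd 1)) <| by
    rintro _ ⟨i, rfl⟩
    rw [map_pow, FreeGroup.lift_apply_of, ← map_pow, ← ofAdd_nsmul, nsmul_one,
      ZMod.natCast_self, ofAdd_zero, map_one]

def ofCoprodI : (CoprodI fun i => Multiplicative (ZMod (n i))) →* PresentedGroup (cyclicRels n) :=
  CoprodI.lift fun i => multiplicativeZModLift (n i) (PresentedGroup.of i) (of_pow_eq_one n i)

def equivCoprodI :
    PresentedGroup (cyclicRels n) ≃* CoprodI fun i => Multiplicative (ZMod (n i)) :=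
  MonoidHom.toMulEquiv (toCoprodI n) (ofCoprodI n)
    (PresentedGroup.ext fun i => by simp [toCoprodI, ofCoprodI])
    (CoprodI.ext_hom _ _ fun i => MonoidHom.ext_multiplicative_zmod <| by
      simp [toCoprodI, ofCoprodI])

theorem center_eq_bot [Nontrivial ι] (hn : ∀ i, 1 < n i) :
    Subgroup.center (PresentedGroup (cyclicRels n)) = ⊥ :=
  haveI : ∀ i, Fact (1 < n i) := fun i => ⟨hn i⟩
  Subgroup.center_eq_bot_of_mulEquiv (equivCoprodI n) CoprodI.center_eq_bot

end cyclicRels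

theorem freeProdRel_eq_cyclicRels (a b : ℕ) :
    freeProdRel a b = cyclicRels fun i => cond i a b := by
  ext r
  simp [freeProdRel, cyclicRels, or_comm]

namespace torusRel

variable (a b : ℕ)

theorem of_pow_cond (i : Bool) :
    (PresentedGroup.of i : PresentedGroup (torusRel a b)) ^ cond i a b =
      PresentedGroup.of true ^ a := by
  cases i
  · exact (mul_inv_eq_one.1 (PresentedGroup.one_of_mem (Set.mem_singleton _))).symm
  · rfl

theorem of_true_pow_mem_center :
    (PresentedGroup.of true : PresentedGroup (torusRel a b)) ^ a ∈
      Subgroup.center (PresentedGroup (torusRel a b)) := by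
  rw [← Subgroup.centralizer_univ, ← Subgroup.coe_top, ← PresentedGroup.closure_range_of,
    Subgroup.centralizer_closure, Subgroup.mem_centralizer_iff]
  rintro _ ⟨i, rfl⟩
  rw [← of_pow_cond a b i]
  exact (Commute.self_pow _ _).eq

instance : (Subgroup.zpowers (PresentedGroup.of true ^ a : PresentedGroup (torusRel a b))).Normal :=
  Subgroup.normal_of_le_center (Subgroup.zpowers_le.2 (of_true_pow_mem_center a b))

def toFreeProd :
    PresentedGroup (torusRel a b) →* PresentedGroup (cyclicRels fun i => cond i a b) :=
  PresentedGroup.toGroup (f := PresentedGroup.of) <| by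
    rintro _ rfl
    have hx : (PresentedGroup.of true : PresentedGroup (cyclicRels fun i => cond i a b)) ^ a = 1 :=
      cyclicRels.of_pow_eq_one _ true
    have hy : (PresentedGroup.of false : PresentedGroup (cyclicRels fun i => cond i a b)) ^ b = 1 :=
      cyclicRels.of_pow_eq_one _ false
    simp [hx, hy]

def ofFreeProd : PresentedGroup (cyclicRels fun i => cond i a b) →*
    PresentedGroup (torusRel a b) ⧸ Subgroup.zpowers (PresentedGroup.of true ^ a) :=
  PresentedGroup.toGroup (f := fun i => QuotientGroup.mk (PresentedGroup.of i)) <| by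
    rintro _ ⟨i, rfl⟩
    rw [map_pow, FreeGroup.lift_apply_of, ← QuotientGroup.mk_pow, of_pow_cond,
      QuotientGroup.eq_one_iff]
    exact Subgroup.mem_zpowers _

theorem zpowers_le_ker_toFreeProd :
    Subgroup.zpowers (PresentedGroup.of true ^ a) ≤ (toFreeProd a b).ker :=
  Subgroup.zpowers_le.2 <| by
    rw [MonoidHom.mem_ker, map_pow, toFreeProd, PresentedGroup.toGroup.of]
    exact cyclicRels.of_pow_eq_one _ true

def quotientZPowersEquiv :
    PresentedGroup (torusRel a b) ⧸ Subgroup.zpowers (PresentedGroup.of true ^ a) ≃*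
      PresentedGroup (cyclicRels fun i => cond i a b) :=
  MonoidHom.toMulEquiv (QuotientGroup.lift _ (toFreeProd a b) (zpowers_le_ker_toFreeProd a b))
    (ofFreeProd a b)
    (QuotientGroup.monoidHom_ext _ <| PresentedGroup.ext fun i => by simp [toFreeProd, ofFreeProd])
    (PresentedGroup.ext fun i => by simp [toFreeProd, ofFreeProd])

end torusRel

/-- for `a, b ≥ 2`, the center of `H = ⟨x, y ∣ x^a = y^b⟩` is the cyclic
subgroup generated by `x^a` (= `y^b`), and `H` modulo its center is isomorphic to the
free product `ℤ/a * ℤ/b`. -/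
theorem stmt16 (a b : ℕ) (ha : 2 ≤ a) (hb : 2 ≤ b) :
    Subgroup.center (PresentedGroup (torusRel a b)) =
      Subgroup.zpowers ((PresentedGroup.of true : PresentedGroup (torusRel a b)) ^ a) ∧
    Nonempty ((PresentedGroup (torusRel a b) ⧸
        Subgroup.center (PresentedGroup (torusRel a b))) ≃*
      PresentedGroup (freeProdRel a b)) := by
  rw [freeProdRel_eq_cyclicRels]
  have hcenter : Subgroup.center (PresentedGroup (torusRel a b)) =
      Subgroup.zpowers (PresentedGroup.of true ^ a) :=
    Subgroup.center_eq_of_center_quotient_eq_bot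
      (Subgroup.zpowers_le.2 (torusRel.of_true_pow_mem_center a b))
      (Subgroup.center_eq_bot_of_mulEquiv (torusRel.quotientZPowersEquiv a b)
        (cyclicRels.center_eq_bot _ fun i => by cases i <;> assumption))
  exact ⟨hcenter, ⟨(QuotientGroup.quotientMulEquivOfEq hcenter).trans
    (torusRel.quotientZPowersEquiv a b)⟩⟩
end

section
/- For every pair (p, q) of coprime integers with q ≠ 0 and every pair (ℓ, m) of coprime integers containing a common Farey neighbor path, there exists a finite path of triangles f₁, …, f_k (k ≥ 4) in the Farey tessellation of H² such that consecutive triangles share an edge, the vertex of f₁ not in f₂ is 0/1, the vertex of f_k not in f_{k−1} is p/q, and ℓ/m is a vertex of some f_i. -/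
/-!
Every `M ∈ SL(2, ℤ)` spans a Farey triangle with vertices its two columns and their sum, and
right multiplication by `S` or `T` moves it to a triangle sharing an edge with it. Since `S` and
`T` generate `SL(2, ℤ)`, all these triangles lie in one component of the dual graph. A coprime
pair is the second column of some `M`, so one walks from the triangle of `1` through the one
containing `ℓ/m` to that of `M`, entering it from the triangle of `M * T`, which avoids `p/q`;
the triangle of `1` is left towards that of `T`, which avoids `0/1`.
-/

/-- Two primitive integer vectors represent the same Farey vertex (slope) iff they
agree up to sign. -/
def SameSlope (v w : ℤ × ℤ) : Prop := v = w ∨ v = (-w.1, -w.2)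

/-- A triangle of the Farey tessellation of `ℍ²`: three slopes, given by primitive
integer vectors, pairwise joined by Farey edges (`|determinant| = 1`). -/
structure FareyTriangle where
  v : Fin 3 → ℤ × ℤ
  prim : ∀ i, IsCoprime (v i).1 (v i).2
  edge : ∀ i j, i ≠ j → |(v i).1 * (v j).2 - (v i).2 * (v j).1| = 1

/-- A slope occurs as a vertex of a Farey triangle. -/
def FareyTriangle.HasVertex (f : FareyTriangle) (w : ℤ × ℤ) : Prop :=
  ∃ i, SameSlope (f.v i) w

/-- Two Farey triangles share an edge: they have two common vertices. -/
def SharesEdge (f g : FareyTriangle) : Prop :=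
  ∃ i j, i ≠ j ∧ g.HasVertex (f.v i) ∧ g.HasVertex (f.v j)

lemma exists_chain_through {α : Type*} {r : α → α → Prop} {a b c d e : α} (hab : r a b)
    (hbc : Relation.ReflTransGen r b c) (hc : r c c) (hcd : Relation.ReflTransGen r c d)
    (hde : r d e) :
    ∃ (k : ℕ) (f : ℕ → α), 4 ≤ k ∧ (∀ i, i + 1 < k → r (f i) (f (i + 1))) ∧
      f 0 = a ∧ f 1 = b ∧ f (k - 1) = e ∧ f (k - 2) = d ∧ ∃ i < k, f i = c := by
  obtain ⟨l₁, hl₁, hlast₁⟩ := List.exists_isChain_cons_of_relationReflTransGen hbc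
  obtain ⟨l₂, hl₂, hlast₂⟩ := List.exists_isChain_cons_of_relationReflTransGen hcd
  set L₁ := a :: b :: l₁
  set L₂ := c :: l₂
  -- `c` occurs twice, which is what makes `4 ≤ k` even when `b = c = d`.
  set L := L₁ ++ L₂ ++ [e]
  have hchain : L.IsChain r := by
    have hL₁ : L₁.IsChain r := List.isChain_cons_cons.mpr ⟨hab, hl₁⟩
    refine (hL₁.append hl₂ ?_).append (.singleton e) ?_
    · simp [L₁, List.getLast?_eq_some_getLast, hlast₁, L₂, hc]
    · simp [List.getLast?_eq_some_getLast, List.getLast_append_of_ne_nil, L₂, hlast₂, hde]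
  have hlen : L.length = L₁.length + l₂.length + 2 := by simp [L, L₂]; omega
  have hget (i : ℕ) (hi : i < L.length) : L.getD i a = L[i] := List.getD_eq_getElem _ _ hi
  refine ⟨L.length, fun i => L.getD i a, by simp [hlen, L₁]; omega, fun i hi => ?_, rfl, rfl, ?_, ?_,
    L₁.length, by omega, ?_⟩
  · simpa only [hget i (by omega), hget (i + 1) hi] using hchain.getElem i hi
  · dsimp only
    rw [hget _ (by omega), ← List.getLast_eq_getElem (l := L) (by simp [L])]
    simp [L]
  · dsimp only
    have : L.length - 2 = (L₁ ++ L₂).length - 1 := by simp [hlen, L₂]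
    rw [hget _ (by omega)]
    simp only [this, L]
    rw [List.getElem_append_left (as := L₁ ++ L₂) (by simp [L₂]),
      ← List.getLast_eq_getElem (by simp [L₂]), List.getLast_append_of_ne_nil _ (by simp [L₂])]
    exact hlast₂
  · dsimp only
    rw [hget _ (by omega)]
    simp [L, L₂]

namespace SameSlope

variable {u v w : ℤ × ℤ}

lemma symm (h : SameSlope v w) : SameSlope w v := by
  obtain ⟨v1, v2⟩ := v; obtain ⟨w1, w2⟩ := w
  simp only [SameSlope, Prod.mk.injEq] at *
  omega

lemma trans (h₁ : SameSlope u v) (h₂ : SameSlope v w) : SameSlope u w := by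
  obtain ⟨u1, u2⟩ := u; obtain ⟨v1, v2⟩ := v; obtain ⟨w1, w2⟩ := w
  simp only [SameSlope, Prod.mk.injEq] at *
  omega

lemma det_eq_zero (h : SameSlope v w) : v.1 * w.2 - v.2 * w.1 = 0 := by
  rcases h with rfl | rfl <;> ring

end SameSlope

lemma FareyTriangle.not_sameSlope (f : FareyTriangle) {i j : Fin 3} (hij : i ≠ j) :
    ¬ SameSlope (f.v i) (f.v j) := by
  intro h
  have := f.edge i j hij
  rw [h.det_eq_zero] at this
  norm_num at this

namespace SharesEdge

lemma refl (f : FareyTriangle) : SharesEdge f f :=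
  ⟨0, 1, by decide, ⟨0, Or.inl rfl⟩, ⟨1, Or.inl rfl⟩⟩

lemma symm {f g : FareyTriangle} (h : SharesEdge f g) : SharesEdge g f := by
  obtain ⟨i, j, hij, ⟨i', hi⟩, ⟨j', hj⟩⟩ := h
  refine ⟨i', j', ?_, ⟨i, hi.symm⟩, ⟨j, hj.symm⟩⟩
  rintro rfl
  exact f.not_sameSlope hij (hi.symm.trans hj)

end SharesEdge

instance : Std.Symm SharesEdge := ⟨fun _ _ => SharesEdge.symm⟩

open Matrix MatrixGroups ModularGroup

lemma Matrix.SpecialLinearGroup.det_fin_two_eq_one {R : Type*} [CommRing R] (M : SL(2, R)) :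
    M 0 0 * M 1 1 - M 0 1 * M 1 0 = 1 :=
  (det_fin_two M.1).symm.trans M.det_coe

def fareyTriangle (M : SL(2, ℤ)) : FareyTriangle where
  v := ![(M 0 0, M 1 0), (M 0 1, M 1 1), (M 0 0 + M 0 1, M 1 0 + M 1 1)]
  prim i := by
    have h := M.det_fin_two_eq_one
    fin_cases i
    · exact ⟨M 1 1, -M 0 1, by simp; linear_combination h⟩
    · exact ⟨-M 1 0, M 0 0, by simp; linear_combination h⟩
    · exact ⟨M 1 1, -M 0 1, by simp; linear_combination h⟩
  edge i j hij := by
    have h := M.det_fin_two_eq_one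
    fin_cases i <;> fin_cases j <;> simp at hij ⊢ <;> rw [abs_eq one_pos.le] <;>
      first | (left; linear_combination h) | (right; linear_combination -h)

lemma sharesEdge_fareyTriangle_mul_T (M : SL(2, ℤ)) :
    SharesEdge (fareyTriangle M) (fareyTriangle (M * T)) := by
  refine ⟨0, 2, by decide, ⟨0, Or.inl ?_⟩, ⟨1, Or.inl ?_⟩⟩ <;>
    simp [fareyTriangle, coe_T, Matrix.mul_apply, Fin.sum_univ_two]

lemma sharesEdge_fareyTriangle_mul_S (M : SL(2, ℤ)) :
    SharesEdge (fareyTriangle M) (fareyTriangle (M * S)) := by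
  refine ⟨0, 1, by decide, ⟨1, Or.inr ?_⟩, ⟨0, Or.inl ?_⟩⟩ <;>
    simp [fareyTriangle, coe_S, Matrix.mul_apply, Fin.sum_univ_two]

lemma not_hasVertex_fareyTriangle_mul_T (M : SL(2, ℤ)) :
    ¬ (fareyTriangle (M * T)).HasVertex ((fareyTriangle M).v 1) := by
  rintro ⟨i, hi⟩
  -- its determinants against the three vertices of `fareyTriangle (M * T)` are `1`, `1`, `2`
  have h := M.det_fin_two_eq_one
  have h0 := hi.det_eq_zero
  fin_cases i <;> simp [fareyTriangle, coe_T, Matrix.mul_apply, Fin.sum_univ_two] at h0 <;>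
    linarith

lemma reflTransGen_sharesEdge_fareyTriangle (M N : SL(2, ℤ)) :
    Relation.ReflTransGen SharesEdge (fareyTriangle M) (fareyTriangle N) := by
  suffices h : ∀ A M, Relation.ReflTransGen SharesEdge (fareyTriangle M) (fareyTriangle (M * A)) by
    simpa using h (M⁻¹ * N) M
  intro A
  have hA : A ∈ Subgroup.closure {S, T} := SpecialLinearGroup.SL2Z_generators ▸ Subgroup.mem_top A
  induction hA using Subgroup.closure_induction with
  | mem A hA =>
    rcases hA with rfl | rfl
    · exact fun M => .single (sharesEdge_fareyTriangle_mul_S M)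
    · exact fun M => .single (sharesEdge_fareyTriangle_mul_T M)
  | one => simpa using fun M => .refl
  | mul A B _ _ hA hB => exact fun M => (hA M).trans (by simpa [mul_assoc] using hB (M * A))
  | inv A _ hA =>
    exact fun M => symm_of (Relation.ReflTransGen SharesEdge) (by simpa using hA (M * A⁻¹))

lemma IsCoprime.exists_fareyTriangle_v_one_eq {p q : ℤ} (h : IsCoprime p q) :
    ∃ M : SL(2, ℤ), (fareyTriangle M).v 1 = (p, q) := by
  obtain ⟨u, v, huv⟩ := h
  exact ⟨⟨!![v, p; -u, q], by simp [Matrix.det_fin_two_of]; linear_combination huv⟩, rfl⟩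

theorem stmt18_general (p q ℓ m : ℤ) (hpq : IsCoprime p q) (hlm : IsCoprime ℓ m) :
    ∃ (k : ℕ) (f : ℕ → FareyTriangle), 4 ≤ k ∧
      (∀ i, i + 1 < k → SharesEdge (f i) (f (i + 1))) ∧
      (∃ i, SameSlope ((f 0).v i) (0, 1) ∧ ¬ (f 1).HasVertex ((f 0).v i)) ∧
      (∃ i, SameSlope ((f (k - 1)).v i) (p, q) ∧ ¬ (f (k - 2)).HasVertex ((f (k - 1)).v i)) ∧
      (∃ i, i < k ∧ (f i).HasVertex (ℓ, m)) := by
  obtain ⟨M, hM⟩ := hpq.exists_fareyTriangle_v_one_eq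
  obtain ⟨N, hN⟩ := hlm.exists_fareyTriangle_v_one_eq
  obtain ⟨k, f, hk, hchain, hf0, hf1, hfk1, hfk2, i, hik, hfi⟩ :=
    exists_chain_through (sharesEdge_fareyTriangle_mul_T 1)
      (reflTransGen_sharesEdge_fareyTriangle _ N) (SharesEdge.refl _)
      (reflTransGen_sharesEdge_fareyTriangle N (M * T)) (sharesEdge_fareyTriangle_mul_T M).symm
  refine ⟨k, f, hk, hchain, ⟨1, ?_, ?_⟩, ⟨1, ?_, ?_⟩, i, hik, 1, ?_⟩
  · rw [hf0]; exact Or.inl rfl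
  · rw [hf0, hf1]; exact not_hasVertex_fareyTriangle_mul_T 1
  · rw [hfk1]; exact Or.inl hM
  · rw [hfk1, hfk2]; exact not_hasVertex_fareyTriangle_mul_T M
  · rw [hfi]; exact Or.inl hN

/-- for coprime `p, q` with `q ≠ 0` and coprime `ℓ, m`, there is a path
of triangles `f₁, …, f_k` (`k ≥ 4`) in the Farey tessellation such that consecutive
triangles share an edge, the vertex of `f₁` not in `f₂` is `0/1`, the vertex of `f_k`
not in `f_{k−1}` is `p/q`, and `ℓ/m` is a vertex of some `f_i`. -/
theorem stmt18 (p q ℓ m : ℤ) (hpq : IsCoprime p q) (hq : q ≠ 0) (hlm : IsCoprime ℓ m) :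
    ∃ (k : ℕ) (f : ℕ → FareyTriangle), 4 ≤ k ∧
      (∀ i, i + 1 < k → SharesEdge (f i) (f (i + 1))) ∧
      (∃ i, SameSlope ((f 0).v i) (0, 1) ∧ ¬ (f 1).HasVertex ((f 0).v i)) ∧
      (∃ i, SameSlope ((f (k - 1)).v i) (p, q) ∧ ¬ (f (k - 2)).HasVertex ((f (k - 1)).v i)) ∧
      (∃ i, i < k ∧ (f i).HasVertex (ℓ, m)) :=
  stmt18_general p q ℓ m hpq hlm
end
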